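/- Let K ≥ 2, n ≥ 1, N = Kn, d ≥ 1, τ > 0. For every W, Δ_W ∈ ℝ^{d×K} and H, Δ_H ∈ ℝ^{d×N}, the function φ(t) = f(W + tΔ_W, H + tΔ_H) is twice differentiable at t = 0, and φ''(0) = (1/N)∑_{j=1}^N [ ε_jᵀ diag(η(m_j)) ε_j − (η(m_j)ᵀ ε_j)² ] + 2τ ⟨G, Δ_WᵀΔ_H⟩_F, where m_j is the j-th column of τWᵀH and ε_j is the j-th column of τ(WᵀΔ_H + Δ_WᵀH). -/

import Mathlib

open scoped BigOperators Matrix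

/-- Cross-entropy loss: `L_CE(z,k) = log (∑_ℓ exp (z_ℓ)) − z_k`. -/
noncomputable def LCE {K : ℕ} (z : Fin K → ℝ) (k : Fin K) : ℝ :=
  Real.log (∑ ℓ, Real.exp (z ℓ)) - z k

/-- The cross-entropy risk `f(W,H) = (1/N) ∑_k ∑_i L_CE(τ Wᵀ h_{k,i}, k)` with `N = K n`. -/
noncomputable def ceRisk {d K n : ℕ} (τ : ℝ) (W : Matrix (Fin d) (Fin K) ℝ)
    (H : Matrix (Fin d) (Fin K × Fin n) ℝ) : ℝ :=
  (1 / ((K : ℝ) * n)) * ∑ k : Fin K, ∑ i : Fin n,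
    LCE (fun ℓ => τ * ∑ r, W r ℓ * H r (k, i)) k

/-- The softmax map `η(z)_j = exp(z_j) / ∑_ℓ exp(z_ℓ)`. -/
noncomputable def softmax {K : ℕ} (z : Fin K → ℝ) (j : Fin K) : ℝ :=
  Real.exp (z j) / ∑ ℓ, Real.exp (z ℓ)

/-- The logits `m_j = τ Wᵀ h_j` for the column `j = (k,i)` of `H`. -/
noncomputable def logits {d K n : ℕ} (τ : ℝ) (W : Matrix (Fin d) (Fin K) ℝ)
    (H : Matrix (Fin d) (Fin K × Fin n) ℝ) (j : Fin K × Fin n) : Fin K → ℝ :=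
  fun ℓ => τ * ∑ r, W r ℓ * H r j

/-- The gradient matrix `G`: its column indexed by `(k,i)` is `(1/N)(η(τ Wᵀ h_{k,i}) − e_k)`. -/
noncomputable def Gmat {d K n : ℕ} (τ : ℝ) (W : Matrix (Fin d) (Fin K) ℝ)
    (H : Matrix (Fin d) (Fin K × Fin n) ℝ) : Matrix (Fin K) (Fin K × Fin n) ℝ :=
  fun ℓ j => (1 / ((K : ℝ) * n)) * (softmax (logits τ W H j) ℓ - if ℓ = j.1 then 1 else 0)

/-- `ε_j`: the `j`-th column of `τ (Wᵀ Δ_H + Δ_Wᵀ H)`. -/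
noncomputable def epsCol {d K n : ℕ} (τ : ℝ) (W ΔW : Matrix (Fin d) (Fin K) ℝ)
    (H ΔH : Matrix (Fin d) (Fin K × Fin n) ℝ) (j : Fin K × Fin n) (ℓ : Fin K) : ℝ :=
  τ * ((∑ r, W r ℓ * ΔH r j) + ∑ r, ΔW r ℓ * H r j)

/-!
Along the line `t ↦ (W + tΔ_W, H + tΔ_H)` each logit vector is a quadratic curve in `t`, with
velocity `ε_j` at `t = 0` and constant acceleration `2τ Δ_Wᵀ Δ_H`. The derivative of log-sum-exp
along a curve is the softmax average of the velocity, and the softmax weights move at rate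
`η_ℓ (z'_ℓ − ⟨η, z'⟩)`; hence the second derivative is the softmax variance of the velocity plus
the softmax average of the acceleration. Subtracting the acceleration of the target logit, the
acceleration terms assemble into `2τ ⟨G, Δ_Wᵀ Δ_H⟩_F`.
-/

open Finset

section LogSumExp

variable {K : ℕ}

lemma sum_exp_pos [NeZero K] (z : Fin K → ℝ) : 0 < ∑ ℓ, Real.exp (z ℓ) :=
  sum_pos (fun _ _ => Real.exp_pos _) univ_nonempty

lemma sum_softmax_mul (z u : Fin K → ℝ) :
    ∑ ℓ, softmax z ℓ * u ℓ = (∑ ℓ, Real.exp (z ℓ) * u ℓ) / ∑ ℓ, Real.exp (z ℓ) := by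
  rw [sum_div]
  exact sum_congr rfl fun ℓ _ => by rw [softmax]; ring

variable {z : ℝ → Fin K → ℝ} {t : ℝ}

lemma hasDerivAt_log_sum_exp [NeZero K] {z' : Fin K → ℝ}
    (hz : ∀ ℓ, HasDerivAt (fun t => z t ℓ) (z' ℓ) t) :
    HasDerivAt (fun t => Real.log (∑ ℓ, Real.exp (z t ℓ))) (∑ ℓ, softmax (z t) ℓ * z' ℓ) t := by
  rw [sum_softmax_mul]
  exact (HasDerivAt.fun_sum fun ℓ _ => (hz ℓ).exp).log (sum_exp_pos (z t)).ne'

lemma hasDerivAt_LCE {z' : Fin K → ℝ} (k : Fin K)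
    (hz : ∀ ℓ, HasDerivAt (fun t => z t ℓ) (z' ℓ) t) :
    HasDerivAt (fun t => LCE (z t) k) (∑ ℓ, softmax (z t) ℓ * z' ℓ - z' k) t :=
  have : NeZero K := NeZero.of_pos k.pos
  (hasDerivAt_log_sum_exp hz).sub (hz k)

lemma hasDerivAt_softmax [NeZero K] {z' : Fin K → ℝ}
    (hz : ∀ ℓ, HasDerivAt (fun t => z t ℓ) (z' ℓ) t) (ℓ : Fin K) :
    HasDerivAt (fun t => softmax (z t) ℓ)
      (softmax (z t) ℓ * (z' ℓ - ∑ m, softmax (z t) m * z' m)) t := by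
  have hS := (sum_exp_pos (z t)).ne'
  refine ((hz ℓ).exp.div (HasDerivAt.fun_sum fun m _ => (hz m).exp) hS).congr_deriv ?_
  rw [sum_softmax_mul, softmax]
  field_simp

lemma hasDerivAt_sum_softmax_mul [NeZero K] {z' : ℝ → Fin K → ℝ} {z'' : Fin K → ℝ}
    (hz : ∀ ℓ, HasDerivAt (fun t => z t ℓ) (z' t ℓ) t)
    (hz' : ∀ ℓ, HasDerivAt (fun t => z' t ℓ) (z'' ℓ) t) :
    HasDerivAt (fun t => ∑ ℓ, softmax (z t) ℓ * z' t ℓ)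
      (∑ ℓ, softmax (z t) ℓ * z' t ℓ ^ 2 - (∑ ℓ, softmax (z t) ℓ * z' t ℓ) ^ 2
        + ∑ ℓ, softmax (z t) ℓ * z'' ℓ) t := by
  refine (HasDerivAt.fun_sum fun ℓ _ => (hasDerivAt_softmax hz ℓ).mul (hz' ℓ)).congr_deriv ?_
  simp only [sum_add_distrib, mul_sub, sub_mul, sum_sub_distrib, mul_right_comm _ (∑ m, _),
    ← sum_mul]
  simp only [mul_assoc, ← sq]

end LogSumExp

section Line

variable {d K n : ℕ} (τ : ℝ) (W ΔW : Matrix (Fin d) (Fin K) ℝ)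
  (H ΔH : Matrix (Fin d) (Fin K × Fin n) ℝ)

lemma ceRisk_eq_sum_logits :
    ceRisk τ W H = 1 / ((K : ℝ) * n) * ∑ j : Fin K × Fin n, LCE (logits τ W H j) j.1 := by
  rw [ceRisk, Fintype.sum_prod_type]
  rfl

lemma sum_Gmat_mul (j : Fin K × Fin n) (u : Fin K → ℝ) :
    ∑ ℓ, Gmat τ W H ℓ j * u ℓ
      = 1 / ((K : ℝ) * n) * (∑ ℓ, softmax (logits τ W H j) ℓ * u ℓ - u j.1) := by
  simp only [Gmat, mul_assoc, ← mul_sum, sub_mul, sum_sub_distrib, ite_mul, one_mul, zero_mul,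
    sum_ite_eq', mem_univ, if_true]

variable (j : Fin K × Fin n) (ℓ : Fin K) (t : ℝ)

lemma hasDerivAt_logits_line :
    HasDerivAt (fun t => logits τ (W + t • ΔW) (H + t • ΔH) j ℓ)
      (epsCol τ (W + t • ΔW) ΔW (H + t • ΔH) ΔH j ℓ) t := by
  have hW r := ((hasDerivAt_id t).mul_const (ΔW r ℓ)).const_add (W r ℓ)
  have hH r := ((hasDerivAt_id t).mul_const (ΔH r j)).const_add (H r j)
  refine ((HasDerivAt.fun_sum fun r _ => (hW r).mul (hH r)).const_mul τ).congr_deriv ?_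
  simp only [epsCol, Matrix.add_apply, Matrix.smul_apply, smul_eq_mul, ← sum_add_distrib, id]
  congr 1
  exact sum_congr rfl fun r _ => by ring

lemma hasDerivAt_epsCol_line :
    HasDerivAt (fun t => epsCol τ (W + t • ΔW) ΔW (H + t • ΔH) ΔH j ℓ)
      (2 * τ * ∑ r, ΔW r ℓ * ΔH r j) t := by
  have hW r := ((hasDerivAt_id t).mul_const (ΔW r ℓ)).const_add (W r ℓ)
  have hH r := ((hasDerivAt_id t).mul_const (ΔH r j)).const_add (H r j)
  refine (((HasDerivAt.fun_sum fun r _ => (hW r).mul_const (ΔH r j)).add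
    (HasDerivAt.fun_sum fun r _ => (hH r).const_mul (ΔW r ℓ))).const_mul τ).congr_deriv ?_
  simp only [mul_sum, ← sum_add_distrib]
  exact sum_congr rfl fun r _ => by ring

lemma hasDerivAt_LCE_logits_line :
    HasDerivAt (fun t => LCE (logits τ (W + t • ΔW) (H + t • ΔH) j) j.1)
      (∑ ℓ, softmax (logits τ (W + t • ΔW) (H + t • ΔH) j) ℓ
          * epsCol τ (W + t • ΔW) ΔW (H + t • ΔH) ΔH j ℓ
        - epsCol τ (W + t • ΔW) ΔW (H + t • ΔH) ΔH j j.1) t :=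
  hasDerivAt_LCE j.1 fun ℓ => hasDerivAt_logits_line τ W ΔW H ΔH j ℓ t

lemma hasDerivAt_LCE_logits_line_deriv :
    HasDerivAt (fun t => ∑ ℓ, softmax (logits τ (W + t • ΔW) (H + t • ΔH) j) ℓ
          * epsCol τ (W + t • ΔW) ΔW (H + t • ΔH) ΔH j ℓ
        - epsCol τ (W + t • ΔW) ΔW (H + t • ΔH) ΔH j j.1)
      (∑ ℓ, softmax (logits τ (W + t • ΔW) (H + t • ΔH) j) ℓ
          * epsCol τ (W + t • ΔW) ΔW (H + t • ΔH) ΔH j ℓ ^ 2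
        - (∑ ℓ, softmax (logits τ (W + t • ΔW) (H + t • ΔH) j) ℓ
          * epsCol τ (W + t • ΔW) ΔW (H + t • ΔH) ΔH j ℓ) ^ 2
        + 2 * τ * (∑ ℓ, softmax (logits τ (W + t • ΔW) (H + t • ΔH) j) ℓ
          * ∑ r, ΔW r ℓ * ΔH r j - ∑ r, ΔW r j.1 * ΔH r j)) t := by
  have : NeZero K := NeZero.of_pos j.1.pos
  refine ((hasDerivAt_sum_softmax_mul (fun ℓ => hasDerivAt_logits_line τ W ΔW H ΔH j ℓ t)
    (fun ℓ => hasDerivAt_epsCol_line τ W ΔW H ΔH j ℓ t)).sub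
    (hasDerivAt_epsCol_line τ W ΔW H ΔH j j.1 t)).congr_deriv ?_
  simp only [mul_left_comm _ (2 * τ), ← mul_sum]
  ring

lemma hasDerivAt_ceRisk_line :
    HasDerivAt (fun t => ceRisk τ (W + t • ΔW) (H + t • ΔH))
      (1 / ((K : ℝ) * n) * ∑ j : Fin K × Fin n,
        (∑ ℓ, softmax (logits τ (W + t • ΔW) (H + t • ΔH) j) ℓ
            * epsCol τ (W + t • ΔW) ΔW (H + t • ΔH) ΔH j ℓ
          - epsCol τ (W + t • ΔW) ΔW (H + t • ΔH) ΔH j j.1)) t := by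
  simp only [ceRisk_eq_sum_logits]
  exact (HasDerivAt.fun_sum fun j _ => hasDerivAt_LCE_logits_line τ W ΔW H ΔH j t).const_mul _

end Line

theorem second_derivative_of_ceRisk_along_line_general (d K n : ℕ) (τ : ℝ)
    (W ΔW : Matrix (Fin d) (Fin K) ℝ) (H ΔH : Matrix (Fin d) (Fin K × Fin n) ℝ) :
    DifferentiableAt ℝ (fun t : ℝ => ceRisk τ (W + t • ΔW) (H + t • ΔH)) 0 ∧
    DifferentiableAt ℝ (deriv fun t : ℝ => ceRisk τ (W + t • ΔW) (H + t • ΔH)) 0 ∧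
    deriv (deriv fun t : ℝ => ceRisk τ (W + t • ΔW) (H + t • ΔH)) 0
      = (1 / ((K : ℝ) * n)) * (∑ j : Fin K × Fin n,
          ((∑ ℓ, softmax (logits τ W H j) ℓ * (epsCol τ W ΔW H ΔH j ℓ) ^ 2)
            - (∑ ℓ, softmax (logits τ W H j) ℓ * epsCol τ W ΔW H ΔH j ℓ) ^ 2))
        + 2 * τ * ∑ ℓ : Fin K, ∑ j : Fin K × Fin n,
            Gmat τ W H ℓ j * (∑ r, ΔW r ℓ * ΔH r j) := by
  have hφ t := hasDerivAt_ceRisk_line τ W ΔW H ΔH t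
  have hφ' := (HasDerivAt.fun_sum (u := univ) fun j _ =>
    hasDerivAt_LCE_logits_line_deriv τ W ΔW H ΔH j 0).const_mul (1 / ((K : ℝ) * n))
  have hderiv := funext fun t => (hφ t).deriv
  refine ⟨(hφ 0).differentiableAt, hderiv ▸ hφ'.differentiableAt, ?_⟩
  rw [hderiv, hφ'.deriv, sum_comm]
  simp only [zero_smul, add_zero, sum_Gmat_mul]
  rw [← mul_sum, sum_add_distrib, ← mul_sum]
  ring

theorem second_derivative_of_ceRisk_along_line (d K n : ℕ) (hK : 2 ≤ K) (hn : 1 ≤ n)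
    (hd : 1 ≤ d) (τ : ℝ) (hτ : 0 < τ)
    (W ΔW : Matrix (Fin d) (Fin K) ℝ) (H ΔH : Matrix (Fin d) (Fin K × Fin n) ℝ) :
    DifferentiableAt ℝ (fun t : ℝ => ceRisk τ (W + t • ΔW) (H + t • ΔH)) 0 ∧
    DifferentiableAt ℝ (deriv fun t : ℝ => ceRisk τ (W + t • ΔW) (H + t • ΔH)) 0 ∧
    deriv (deriv fun t : ℝ => ceRisk τ (W + t • ΔW) (H + t • ΔH)) 0
      = (1 / ((K : ℝ) * n)) * (∑ j : Fin K × Fin n,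
          ((∑ ℓ, softmax (logits τ W H j) ℓ * (epsCol τ W ΔW H ΔH j ℓ) ^ 2)
            - (∑ ℓ, softmax (logits τ W H j) ℓ * epsCol τ W ΔW H ΔH j ℓ) ^ 2))
        + 2 * τ * ∑ ℓ : Fin K, ∑ j : Fin K × Fin n,
            Gmat τ W H ℓ j * (∑ r, ΔW r ℓ * ΔH r j) :=
  second_derivative_of_ceRisk_along_line_general d K n τ W ΔW H ΔH
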